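/- arXiv:1007.2983 — 3 statements merged into one kernel-verified Lean document; each statement's English description precedes it below -/
import Mathlib

section
/- For every positive integer ℓ, the sum of c(ℓ,k)/2^k over k from 1 to ℓ with k even equals ((2ℓ)! / (2^{2ℓ+1} ℓ!)) · ((2ℓ-2)/(2ℓ-1)). -/
/-- Number of cycles of a permutation, counting fixed points as cycles of length 1. -/
def numCycles {n : ℕ} (σ : Equiv.Perm (Fin n)) : ℕ :=
  Multiset.card σ.cycleType + (n - σ.cycleType.sum)

/-- The unsigned Stirling number of the first kind: the number of permutations of
`ℓ` letters with exactly `k` cycles. -/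
noncomputable def stirlingC (ℓ k : ℕ) : ℕ :=
  Nat.card {σ : Equiv.Perm (Fin ℓ) // numCycles σ = k}

/-- The signed Stirling number of the first kind. -/
noncomputable def stirlingS (ℓ k : ℕ) : ℤ :=
  (-1) ^ (ℓ - k) * stirlingC ℓ k

/-!
Let `P(x) = ∑_σ x ^ (number of cycles of σ)` over the permutations of `ℓ` letters. Writing a
permutation of `Fin (n + 1)` as `swap 0 p * σ'` with `σ' 0 = 0`, the letter `0` is a new fixed point
when `p = 0` and otherwise joins the cycle of `p`, so `P(x) = x (x + 1) ⋯ (x + ℓ - 1)`. The sum in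
question is the even part `(P(1/2) + P(-1/2)) / 2`, where `P(1/2) = (2ℓ)! / (4^ℓ ℓ!)` and
`P(-1/2) = -P(1/2) / (2ℓ - 1)`.
-/

open Equiv Finset

theorem Nat.Partition.card_parts_le {n : ℕ} (p : n.Partition) : p.parts.card ≤ n := by
  simpa [p.parts_sum] using Multiset.card_nsmul_le_sum (s := p.parts) (a := 1)
    fun i hi => p.parts_pos hi

theorem Nat.Partition.card_parts_pos {n : ℕ} (p : n.Partition) (hn : 0 < n) : 0 < p.parts.card := by
  refine Multiset.card_pos.mpr fun h => hn.ne ?_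
  rw [← p.parts_sum, h, Multiset.sum_zero]

namespace Equiv.Perm

variable {α : Type*} [Fintype α] [DecidableEq α]

theorem card_parts_partition (σ : Perm α) :
    σ.partition.parts.card = σ.cycleType.card + (Fintype.card α - #σ.support) := by
  simp [parts_partition]

theorem card_parts_partition_mul_formPerm {d : Perm α} {l : List α} (hl : l.Nodup)
    (hne : l ≠ []) (hd : ∀ x ∈ l, d x = x) :
    (d * l.formPerm).partition.parts.card + l.length = d.partition.parts.card + 1 := by
  rcases l with _ | ⟨x, _ | ⟨y, l⟩⟩
  · exact absurd rfl hne
  · simp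
  · set l' := x :: y :: l
    have hlen : 2 ≤ l'.length := by simp [l']
    have hsupp : l'.formPerm.support = l'.toFinset :=
      List.support_formPerm_of_nodup _ hl (by simp [l'])
    have hdisj : Disjoint d l'.formPerm := fun z =>
      (em (z ∈ l')).imp (hd z) List.formPerm_apply_of_notMem
    have hcard : #l'.formPerm.support = l'.length := by
      rw [hsupp, List.toFinset_card_of_nodup hl]
    have hbound : #d.support + l'.length ≤ Fintype.card α := by
      rw [← hcard, ← hdisj.card_support_mul]
      exact card_le_univ _
    rw [card_parts_partition, card_parts_partition, hdisj.cycleType_mul,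
      (List.isCycle_formPerm hl hlen).cycleType, hdisj.card_support_mul, hcard]
    simp only [Multiset.card_add, Multiset.card_singleton]
    omega

theorem exists_cons_formPerm_eq_cycleOf (f : Perm α) (b : α) :
    ∃ t : List α, (b :: t).Nodup ∧ (b :: t).formPerm = f.cycleOf b ∧
      ∀ x ∈ b :: t, f.SameCycle b x := by
  by_cases hb : b ∈ f.support
  · obtain ⟨c, t, hct⟩ := List.exists_cons_of_ne_nil (toList_eq_nil_iff.not.mpr (not_not.mpr hb))
    have hc : c = b := by simpa [hct] using toList_getElem_zero f b hb
    subst hc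
    refine ⟨t, hct ▸ nodup_toList f c, hct ▸ formPerm_toList f c, fun x hx => ?_⟩
    exact (mem_toList_iff.mp (hct ▸ hx)).1
  · refine ⟨[], List.nodup_singleton b, ?_, fun x hx => List.mem_singleton.mp hx ▸ .refl f b⟩
    rw [List.formPerm_singleton, eq_comm, cycleOf_eq_one_iff]
    exact notMem_support.mp hb

theorem card_parts_partition_swap_mul {f : Perm α} {a b : α} (hab : a ≠ b) (ha : f a = a) :
    (swap a b * f).partition.parts.card + 1 = f.partition.parts.card := by
  obtain ⟨t, hnodup, hform, hsame⟩ := exists_cons_formPerm_eq_cycleOf f b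
  set d := f * (f.cycleOf b)⁻¹
  have hd : ∀ x, f.SameCycle b x → d x = x := fun x hx => by
    rw [mul_apply, cycleOf_inv, (sameCycle_inv.mpr hx).cycleOf_apply, ← Perm.mul_apply,
      mul_inv_cancel, one_apply]
  have hda : d a = a := by
    have : f.cycleOf b a = a := by rw [cycleOf_apply]; split_ifs <;> [exact ha; rfl]
    rw [mul_apply, inv_eq_iff_eq.mpr this.symm, ha]
  have ha_notMem : a ∉ b :: t := fun h => hab ((hsame a h).symm.eq_of_left ha)
  -- `d` fixes `a` and the cycle of `b`, so `swap a b` commutes past `d` and inserts `a` into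
  -- that cycle.
  have hf : f = d * (b :: t).formPerm := by rw [hform, inv_mul_cancel_right]
  have hg : swap a b * f = d * (a :: b :: t).formPerm := by
    rw [List.formPerm_cons_cons, ← mul_assoc, mul_swap_eq_swap_mul, hda, hd b .rfl, mul_assoc,
      ← hf]
  have h₁ := card_parts_partition_mul_formPerm hnodup (List.cons_ne_nil b t)
    fun x hx => hd x (hsame x hx)
  have h₂ := card_parts_partition_mul_formPerm (hnodup.cons ha_notMem) (List.cons_ne_nil a _)
    fun x hx => (List.mem_cons.mp hx).elim (· ▸ hda) fun hx => hd x (hsame x hx)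
  rw [← hf] at h₁
  rw [← hg] at h₂
  simp only [List.length_cons] at h₁ h₂
  omega

theorem decomposeFin_symm_zero {n : ℕ} (e : Perm (Fin n)) :
    decomposeFin.symm (0, e) = e.extendDomain (finSuccAboveEquiv 0) := by
  refine Equiv.ext fun x => Fin.cases ?_ (fun i => ?_) x
  · rw [decomposeFin_symm_apply_zero, extendDomain_apply_not_subtype _ _ (by simp)]
  · have : i.succ = finSuccAboveEquiv 0 i := by simp [finSuccAboveEquiv_apply]
    rw [decomposeFin_symm_apply_succ, swap_self, this, extendDomain_apply_image]
    simp [finSuccAboveEquiv_apply]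

theorem decomposeFin_symm_eq_swap_mul {n : ℕ} (p : Fin (n + 1)) (e : Perm (Fin n)) :
    decomposeFin.symm (p, e) = swap 0 p * decomposeFin.symm (0, e) := by
  refine Equiv.ext fun x => Fin.cases ?_ (fun i => ?_) x
  · simp
  · simp [decomposeFin_symm_apply_succ]

theorem card_parts_partition_decomposeFin_symm {n : ℕ} (p : Fin (n + 1)) (e : Perm (Fin n)) :
    (decomposeFin.symm (p, e)).partition.parts.card =
      e.partition.parts.card + if p = 0 then 1 else 0 := by
  have hzero : (decomposeFin.symm (0, e)).partition.parts.card = e.partition.parts.card + 1 := by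
    have := card_le_univ e.support
    rw [decomposeFin_symm_zero, card_parts_partition, card_parts_partition, cycleType_extendDomain,
      card_support_extend_domain]
    simp only [Fintype.card_fin] at this ⊢
    omega
  split_ifs with hp
  · rw [hp, hzero]
  · have := card_parts_partition_swap_mul (Ne.symm hp) (decomposeFin_symm_apply_zero 0 e)
    rw [decomposeFin_symm_eq_swap_mul]
    omega

theorem sum_pow_card_parts_partition {R : Type*} [CommSemiring R] (x : R) (n : ℕ) :
    ∑ σ : Perm (Fin n), x ^ σ.partition.parts.card = ∏ i ∈ range n, (x + i) := by
  induction n with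
  | zero => simp [card_parts_partition]
  | succ n ih =>
    rw [← decomposeFin.symm.sum_comp, Fintype.sum_prod_type]
    simp_rw [card_parts_partition_decomposeFin_symm, pow_add, ← sum_mul, ih, ← mul_sum,
      Fin.sum_univ_succ]
    simp [prod_range_succ, mul_comm]

end Equiv.Perm

theorem numCycles_eq_card_parts_partition {n : ℕ} (σ : Perm (Fin n)) :
    numCycles σ = σ.partition.parts.card := by
  rw [numCycles, Perm.card_parts_partition, Perm.sum_cycleType, Fintype.card_fin]

theorem sum_stirlingC_mul_pow {R : Type*} [CommSemiring R] {n : ℕ} (hn : 0 < n) (x : R) :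
    ∑ k ∈ Icc 1 n, (stirlingC n k : R) * x ^ k = ∏ i ∈ range n, (x + i) := by
  have hmem : ∀ σ : Perm (Fin n), numCycles σ ∈ Icc 1 n := fun σ => by
    rw [numCycles_eq_card_parts_partition, mem_Icc]
    exact ⟨σ.partition.card_parts_pos (by simpa using hn), by simpa using σ.partition.card_parts_le⟩
  rw [← Perm.sum_pow_card_parts_partition,
    ← sum_fiberwise_of_maps_to (g := numCycles) fun σ _ => hmem σ]
  refine sum_congr rfl fun k _ => ?_
  rw [stirlingC, Nat.card_eq_fintype_card, Fintype.card_subtype, ← nsmul_eq_mul, ← sum_const]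
  exact sum_congr rfl fun σ hσ => by rw [← numCycles_eq_card_parts_partition, (mem_filter.1 hσ).2]

theorem two_mul_sum_filter_even {R : Type*} [CommRing R] (s : Finset ℕ) (c : ℕ → R) (x : R) :
    2 * ∑ k ∈ s with Even k, c k * x ^ k = ∑ k ∈ s, c k * x ^ k + ∑ k ∈ s, c k * (-x) ^ k := by
  rw [sum_filter, mul_sum, ← sum_add_distrib]
  refine sum_congr rfl fun k _ => ?_
  rcases Nat.even_or_odd k with hk | hk
  · rw [if_pos hk, hk.neg_pow]; ring
  · rw [if_neg (Nat.not_even_iff_odd.mpr hk), hk.neg_pow]; ring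

section

variable {K : Type*} [Field K] [CharZero K]

theorem prod_range_inv_two_add (n : ℕ) :
    ∏ i ∈ range n, (2⁻¹ + i : K) = (2 * n).factorial / (4 ^ n * n.factorial) := by
  induction n with
  | zero => simp
  | succ n ih =>
    rw [prod_range_succ, ih, Nat.mul_succ, Nat.factorial_succ, Nat.factorial_succ,
      Nat.factorial_succ]
    push_cast
    field_simp
    ring

theorem prod_range_succ_neg_inv_two_add (n : ℕ) :
    (∏ i ∈ range (n + 1), (-2⁻¹ + i : K)) * (2 * n + 1) = -∏ i ∈ range (n + 1), (2⁻¹ + i : K) := by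
  rw [prod_range_succ', prod_range_succ]
  have : ∀ i ∈ range n, (-2⁻¹ + ((i + 1 : ℕ) : K)) = 2⁻¹ + i := fun i _ => by push_cast; ring
  rw [prod_congr rfl this]
  ring

end

theorem stmt_8 (ℓ : ℕ) (hℓ : 0 < ℓ) :
    ∑ k ∈ (Finset.Icc 1 ℓ).filter (fun k => Even k), (stirlingC ℓ k : ℝ) / 2 ^ k
      = (Nat.factorial (2 * ℓ)) / (2 ^ (2 * ℓ + 1) * Nat.factorial ℓ) *
          ((2 * (ℓ : ℝ) - 2) / (2 * (ℓ : ℝ) - 1)) := by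
  obtain ⟨n, rfl⟩ := Nat.exists_eq_add_one.mpr hℓ
  have hn : (2 * n + 1 : ℝ) ≠ 0 := by positivity
  have heven := two_mul_sum_filter_even (Icc 1 (n + 1)) (fun k => (stirlingC (n + 1) k : ℝ)) 2⁻¹
  have hneg := prod_range_succ_neg_inv_two_add (K := ℝ) n
  rw [sum_stirlingC_mul_pow hℓ, sum_stirlingC_mul_pow hℓ, eq_div_of_mul_eq hn hneg,
    prod_range_inv_two_add] at heven
  simp_rw [div_eq_mul_inv (stirlingC _ _ : ℝ), ← inv_pow]
  rw [← mul_right_inj' (two_ne_zero' ℝ), heven, pow_succ (2 : ℝ), pow_mul,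
    show (2 * ((n + 1 : ℕ) : ℝ) - 2) / (2 * ((n + 1 : ℕ) : ℝ) - 1) = 2 * n / (2 * n + 1) by
      push_cast; ring_nf]
  field_simp
  ring
end

section
/- For real numbers y > x ≥ 1, the ratio of Gamma values satisfies x^{x-1/2} e^{y-x} / y^{y-1/2} < Γ(x)/Γ(y) < x^{x-1} e^{y-x} / y^{y-1}. -/
/-!
Write φ = log Γ. The upper bound says that t ↦ (t - 1/2) log t - t - φ t is strictly increasing
on (0, ∞), the lower bound that t ↦ φ t - ((t - 1) log t - t) is. Both are limits of the same
functions with φ replaced by the approximants t log n + log n! - ∑_{m ≤ n} log (t + m) of the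
Euler limit formula, whose t-derivative is log n - ∑_{m ≤ n} 1 / (t + m). Comparing this sum with
∫ ds / s by the trapezoid rule and by left endpoints gives non-strict monotonicity. Strictness then
comes from φ (t + 1) = φ t + log t: the increment G t - G (t + 1) of either function G is an
elementary function of t, strictly increasing by the same two estimates for log (1 + 1/t).
-/

open Real Set Filter Finset

theorem inv_add_one_lt_log_add_one_sub_log {s : ℝ} (hs : 0 < s) :
    (s + 1)⁻¹ < log (s + 1) - log s := by
  have h := log_lt_sub_one_of_pos (x := s / (s + 1)) (by positivity) (by
    rw [Ne, div_eq_one_iff_eq (by positivity)]; linarith)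
  rw [log_div hs.ne' (by positivity)] at h
  have : s / (s + 1) - 1 = -(s + 1)⁻¹ := by field_simp; ring
  linarith

theorem log_add_one_sub_log_lt {s : ℝ} (hs : 0 < s) :
    log (s + 1) - log s < (s⁻¹ + (s + 1)⁻¹) / 2 := by
  obtain ⟨u, hu⟩ : ∃ u : ℝ, u = 1 / (2 * s + 1) := ⟨_, rfl⟩
  have hu0 : 0 < u := by rw [hu]; positivity
  have hu1 : u < 1 := by rw [hu, div_lt_one (by positivity)]; linarith
  -- log (1 + 1/s) = ∑ 2 u^(2k+1) / (2k+1) is dominated termwise by ∑ 2 u^(2k+1) = 2u / (1 - u²).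
  have hgeom : HasSum (fun k : ℕ => 2 * u * (u ^ 2) ^ k) (2 * u * (1 - u ^ 2)⁻¹) :=
    (hasSum_geometric_of_lt_one (by positivity) (by nlinarith)).mul_left (2 * u)
  have hlog : log (s + 1) - log s = log (1 + s⁻¹) := by
    rw [← log_div (by positivity) hs.ne']; congr 1; field_simp
  have hsum : 2 * u * (1 - u ^ 2)⁻¹ = (s⁻¹ + (s + 1)⁻¹) / 2 := by
    have : 1 - u ^ 2 = 4 * s * (s + 1) / (2 * s + 1) ^ 2 := by rw [hu]; field_simp; ring
    rw [this, hu]; field_simp; ring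
  rw [hlog, ← hsum]
  have hseries := hasSum_log_one_add_inv hs
  rw [← hu] at hseries
  refine hasSum_lt (i := 1) (fun k => ?_) ?_ hseries hgeom
  · have hk : 2 * (1 / (2 * (k : ℝ) + 1)) ≤ 2 := by
      rw [mul_le_iff_le_one_right two_pos, div_le_one (by positivity)]
      linarith [k.cast_nonneg (α := ℝ)]
    calc 2 * (1 / (2 * (k : ℝ) + 1)) * u ^ (2 * k + 1) ≤ 2 * u ^ (2 * k + 1) := by gcongr
      _ = 2 * u * (u ^ 2) ^ k := by ring
  · norm_num
    nlinarith [pow_pos hu0 3]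

theorem hasDerivAt_log_add_one_sub_log {t : ℝ} (ht : 0 < t) :
    HasDerivAt (fun s => log (s + 1) - log s) ((t + 1)⁻¹ - t⁻¹) t := by
  simpa using (((hasDerivAt_id t).add_const 1).log (by positivity)).fun_sub (hasDerivAt_log ht.ne')

theorem hasDerivAt_sub_mul_log_sub (c : ℝ) {t : ℝ} (ht : 0 < t) :
    HasDerivAt (fun s => (s - c) * log s - s) (log t - c / t) t := by
  have h := (((hasDerivAt_id t).sub_const c).mul (hasDerivAt_log ht.ne')).sub (hasDerivAt_id t)
  refine h.congr_deriv ?_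
  simp only [id]
  field_simp
  ring

theorem monotoneOn_Ioi_of_hasDerivAt_nonneg {f f' : ℝ → ℝ} {a : ℝ}
    (hf : ∀ t ∈ Ioi a, HasDerivAt f (f' t) t) (hf' : ∀ t ∈ Ioi a, 0 ≤ f' t) :
    MonotoneOn f (Ioi a) :=
  monotoneOn_of_hasDerivWithinAt_nonneg (convex_Ioi a)
    (fun t ht => (hf t ht).continuousAt.continuousWithinAt)
    (by simpa using fun t ht => (hf t ht).hasDerivWithinAt) (by simpa using hf')

theorem strictMonoOn_Ioi_of_hasDerivAt_pos {f f' : ℝ → ℝ} {a : ℝ}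
    (hf : ∀ t ∈ Ioi a, HasDerivAt f (f' t) t) (hf' : ∀ t ∈ Ioi a, 0 < f' t) :
    StrictMonoOn f (Ioi a) :=
  strictMonoOn_of_hasDerivWithinAt_pos (convex_Ioi a)
    (fun t ht => (hf t ht).continuousAt.continuousWithinAt)
    (by simpa using fun t ht => (hf t ht).hasDerivWithinAt) (by simpa using hf')

theorem MonotoneOn.strictMonoOn_of_strictMonoOn_sub_add_one {G : ℝ → ℝ} {a : ℝ}
    (hG : MonotoneOn G (Ioi a)) (hstep : StrictMonoOn (fun t => G t - G (t + 1)) (Ioi a)) :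
    StrictMonoOn G (Ioi a) := by
  intro x (hx : a < x) y (hy : a < y) hxy
  have hshift : G (x + 1) ≤ G (y + 1) :=
    hG (show a < x + 1 by linarith) (show a < y + 1 by linarith) (by linarith)
  have hincr : G x - G (x + 1) < G y - G (y + 1) := hstep hx hy hxy
  linarith

theorem sum_range_inv_add_le {t : ℝ} (ht : 0 < t) (n : ℕ) :
    ∑ m ∈ range (n + 1), (t + m)⁻¹ ≤ t⁻¹ + (log (t + n) - log t) := by
  have hstep (m : ℕ) : (t + ↑(m + 1))⁻¹ ≤ log (t + ↑(m + 1)) - log (t + m) := by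
    push_cast
    rw [← add_assoc]
    exact (inv_add_one_lt_log_add_one_sub_log (by positivity)).le
  have := sum_le_sum fun m (_ : m ∈ range n) => hstep m
  rw [sum_range_sub (fun m : ℕ => log (t + m))] at this
  simp only [CharP.cast_eq_zero, add_zero] at this
  rw [sum_range_succ', CharP.cast_eq_zero, add_zero]
  linarith

theorem le_sum_range_inv_add {t : ℝ} (ht : 0 < t) (n : ℕ) :
    log (t + n) - log t + (t⁻¹ + (t + n)⁻¹) / 2 ≤ ∑ m ∈ range (n + 1), (t + m)⁻¹ := by
  set b : ℕ → ℝ := fun m => log (t + m) - (t + m)⁻¹ / 2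
  have hstep (m : ℕ) : b (m + 1) - b m ≤ (t + m)⁻¹ := by
    have := log_add_one_sub_log_lt (s := t + m) (by positivity)
    simp only [b]
    push_cast
    rw [← add_assoc]
    linarith
  have := sum_le_sum fun m (_ : m ∈ range n) => hstep m
  rw [sum_range_sub] at this
  simp only [b, CharP.cast_eq_zero, add_zero] at this
  rw [sum_range_succ]
  linarith

theorem log_Gamma_add_one {t : ℝ} (ht : 0 < t) : log (Gamma (t + 1)) = log (Gamma t) + log t := by
  rw [Gamma_add_one ht.ne', log_mul ht.ne' (Gamma_pos_of_pos ht).ne', add_comm]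

theorem hasDerivAt_logGammaSeq (n : ℕ) {t : ℝ} (ht : 0 < t) :
    HasDerivAt (fun s => BohrMollerup.logGammaSeq s n)
      (log n - ∑ m ∈ range (n + 1), (t + m)⁻¹) t := by
  have hsum : HasDerivAt (fun s => ∑ m ∈ range (n + 1), log (s + m))
      (∑ m ∈ range (n + 1), (t + m)⁻¹) t :=
    HasDerivAt.fun_sum fun m _ => by
      simpa using ((hasDerivAt_id t).add_const (m : ℝ)).log (by positivity)
  unfold BohrMollerup.logGammaSeq
  simpa using ((hasDerivAt_mul_const (log n)).add_const (log n.factorial)).fun_sub hsum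

theorem log_Gamma_sub_log_Gamma_le {x y : ℝ} (hx : 0 < x) (hxy : x ≤ y) :
    log (Gamma y) - log (Gamma x) ≤ ((y - 1 / 2) * log y - y) - ((x - 1 / 2) * log x - x) := by
  have hseq (n : ℕ) (hn : 1 ≤ n) : BohrMollerup.logGammaSeq y n - BohrMollerup.logGammaSeq x n
      ≤ ((y - 1 / 2) * log y - y) - ((x - 1 / 2) * log x - x) := by
    have hmono : MonotoneOn (fun t => ((t - 1 / 2) * log t - t) - BohrMollerup.logGammaSeq t n)
        (Ioi 0) := by
      refine monotoneOn_Ioi_of_hasDerivAt_nonneg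
        (fun t ht => (hasDerivAt_sub_mul_log_sub _ ht).sub (hasDerivAt_logGammaSeq n ht))
        fun t (ht : 0 < t) => ?_
      have hsum := le_sum_range_inv_add ht n
      have hlog : log n ≤ log (t + n) := log_le_log (by positivity) (by linarith)
      have : 1 / 2 / t = t⁻¹ / 2 := by ring
      have : 0 ≤ (t + n)⁻¹ := by positivity
      linarith
    have := hmono hx (hx.trans_le hxy) hxy
    simp only at this
    linarith
  refine le_of_tendsto ((BohrMollerup.tendsto_log_gamma (hx.trans_le hxy)).sub
    (BohrMollerup.tendsto_log_gamma hx)) ?_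
  filter_upwards [eventually_ge_atTop 1] with n hn using hseq n hn

theorem le_log_Gamma_sub_log_Gamma {x y : ℝ} (hx : 0 < x) (hxy : x ≤ y) :
    ((y - 1) * log y - y) - ((x - 1) * log x - x) ≤ log (Gamma y) - log (Gamma x) := by
  -- The term t² / (2n) absorbs the error log (t + n) - log n ≤ t / n and vanishes as n → ∞.
  have hseq (n : ℕ) (hn : 1 ≤ n) : ((y - 1) * log y - y) - ((x - 1) * log x - x) ≤
      BohrMollerup.logGammaSeq y n - BohrMollerup.logGammaSeq x n + (y ^ 2 - x ^ 2) / 2 / n := by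
    have hn0 : (0 : ℝ) < n := by exact_mod_cast hn
    have hsq (t : ℝ) : HasDerivAt (fun s : ℝ => s ^ 2 / 2 / n) (t / n) t := by
      simpa using ((hasDerivAt_pow 2 t).div_const 2).div_const (n : ℝ)
    have hmono : MonotoneOn
        (fun t => BohrMollerup.logGammaSeq t n - ((t - 1) * log t - t) + t ^ 2 / 2 / n)
        (Ioi 0) := by
      refine monotoneOn_Ioi_of_hasDerivAt_nonneg
        (fun t ht => ((hasDerivAt_logGammaSeq n ht).sub (hasDerivAt_sub_mul_log_sub _ ht)).add
          (hsq t)) fun t (ht : 0 < t) => ?_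
      have hsum := sum_range_inv_add_le ht n
      have hlog : log (t + n) - log n ≤ t / n := by
        have := log_le_sub_one_of_pos (x := (t + n) / n) (by positivity)
        rw [log_div (by positivity) hn0.ne'] at this
        have h : (t + n) / n - 1 = t / n := by field_simp; ring
        linarith
      have : 1 / t = t⁻¹ := one_div t
      linarith
    have := hmono hx (hx.trans_le hxy) hxy
    simp only at this
    have : (y ^ 2 - x ^ 2) / 2 / n = y ^ 2 / 2 / n - x ^ 2 / 2 / n := by ring
    linarith
  have hlim := ((BohrMollerup.tendsto_log_gamma (hx.trans_le hxy)).sub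
    (BohrMollerup.tendsto_log_gamma hx)).add
    (tendsto_const_div_atTop_nhds_zero_nat ((y ^ 2 - x ^ 2) / 2))
  rw [add_zero] at hlim
  refine ge_of_tendsto hlim ?_
  filter_upwards [eventually_ge_atTop 1] with n hn using hseq n hn

theorem log_Gamma_sub_log_Gamma_lt {x y : ℝ} (hx : 0 < x) (hxy : x < y) :
    log (Gamma y) - log (Gamma x) < ((y - 1 / 2) * log y - y) - ((x - 1 / 2) * log x - x) := by
  set G : ℝ → ℝ := fun t => ((t - 1 / 2) * log t - t) - log (Gamma t)
  have hG : MonotoneOn G (Ioi 0) := fun a ha b _ hab => by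
    have := log_Gamma_sub_log_Gamma_le ha hab
    simp only [G]
    linarith
  have hstep : StrictMonoOn (fun t => G t - G (t + 1)) (Ioi 0) := by
    refine (strictMonoOn_Ioi_of_hasDerivAt_pos
      (f := fun t => 1 - (t + 1 / 2) * (log (t + 1) - log t))
      (f' := fun t => (t⁻¹ + (t + 1)⁻¹) / 2 - (log (t + 1) - log t))
      (fun t (ht : 0 < t) => ?_) fun t (ht : 0 < t) => ?_).congr fun t (ht : 0 < t) => ?_
    · refine ((((hasDerivAt_id t).add_const (1 / 2)).mul
        (hasDerivAt_log_add_one_sub_log ht)).const_sub 1).congr_deriv ?_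
      simp only [id]
      field_simp
      ring
    · linarith [log_add_one_sub_log_lt ht]
    · simp only [G, log_Gamma_add_one ht]
      ring
  have := hG.strictMonoOn_of_strictMonoOn_sub_add_one hstep hx (hx.trans hxy) hxy
  simp only [G] at this
  linarith

theorem lt_log_Gamma_sub_log_Gamma {x y : ℝ} (hx : 0 < x) (hxy : x < y) :
    ((y - 1) * log y - y) - ((x - 1) * log x - x) < log (Gamma y) - log (Gamma x) := by
  set G : ℝ → ℝ := fun t => log (Gamma t) - ((t - 1) * log t - t)
  have hG : MonotoneOn G (Ioi 0) := fun a ha b _ hab => by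
    have := le_log_Gamma_sub_log_Gamma ha hab
    simp only [G]
    linarith
  have hstep : StrictMonoOn (fun t => G t - G (t + 1)) (Ioi 0) := by
    refine (strictMonoOn_Ioi_of_hasDerivAt_pos (f := fun t => t * (log (t + 1) - log t) - 1)
      (f' := fun t => log (t + 1) - log t - (t + 1)⁻¹)
      (fun t (ht : 0 < t) => ?_) fun t (ht : 0 < t) => ?_).congr fun t (ht : 0 < t) => ?_
    · refine (((hasDerivAt_id t).mul
        (hasDerivAt_log_add_one_sub_log ht)).sub_const 1).congr_deriv ?_
      simp only [id]
      field_simp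
      ring
    · linarith [inv_add_one_lt_log_add_one_sub_log ht]
    · simp only [G, log_Gamma_add_one ht]
      ring
  have := hG.strictMonoOn_of_strictMonoOn_sub_add_one hstep hx (hx.trans hxy) hxy
  simp only [G] at this
  linarith

theorem rpow_mul_exp_div_rpow {x y : ℝ} (hx : 0 < x) (hy : 0 < y) (a b c : ℝ) :
    x ^ a * exp c / y ^ b = exp (a * log x + c - b * log y) := by
  rw [rpow_def_of_pos hx, rpow_def_of_pos hy, ← exp_add, ← exp_sub, mul_comm (log x),
    mul_comm (log y)]

theorem stmt_14 (x y : ℝ) (hx : 1 ≤ x) (hxy : x < y) :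
    x ^ (x - 1 / 2) * Real.exp (y - x) / y ^ (y - 1 / 2)
        < Real.Gamma x / Real.Gamma y ∧
    Real.Gamma x / Real.Gamma y
        < x ^ (x - 1) * Real.exp (y - x) / y ^ (y - 1) := by
  have hx0 : 0 < x := by linarith
  have hy0 : 0 < y := hx0.trans hxy
  have hratio : Gamma x / Gamma y = exp (log (Gamma x) - log (Gamma y)) := by
    rw [exp_sub, exp_log (Gamma_pos_of_pos hx0), exp_log (Gamma_pos_of_pos hy0)]
  rw [hratio, rpow_mul_exp_div_rpow hx0 hy0, rpow_mul_exp_div_rpow hx0 hy0, exp_lt_exp, exp_lt_exp]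
  exact ⟨by linarith [log_Gamma_sub_log_Gamma_lt hx0 hxy],
    by linarith [lt_log_Gamma_sub_log_Gamma hx0 hxy]⟩
end

section
/- For every positive integer ℓ, the quantity Γ(ℓ - 1/4)/(4 Γ(3/4) ℓ!) satisfies 1/(5(ℓ+1)^{5/4}) < Γ(ℓ - 1/4)/(4 Γ(3/4) ℓ!) < 18/(25(ℓ+1)^{5/4}). -/
open Real

lemma aux_sqrt_pi_lt : Real.sqrt Real.pi < 1.775 := by
  have h := Real.pi_lt_d2
  have h1 : Real.sqrt Real.pi ^ 2 = Real.pi := Real.sq_sqrt Real.pi_pos.le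
  nlinarith [Real.sqrt_nonneg Real.pi]

lemma aux_G32 : Real.Gamma (3/2) = Real.sqrt Real.pi / 2 := by
  have : (3/2 : ℝ) = 1/2 + 1 := by norm_num
  rw [this, Real.Gamma_add_one (by norm_num), Real.Gamma_one_half_eq]; ring

lemma aux_G52 : Real.Gamma (5/2) = 3/4 * Real.sqrt Real.pi := by
  have : (5/2 : ℝ) = 3/2 + 1 := by norm_num
  rw [this, Real.Gamma_add_one (by norm_num), aux_G32]; ring

lemma aux_G72 : Real.Gamma (7/2) = 15/8 * Real.sqrt Real.pi := by
  have : (7/2 : ℝ) = 5/2 + 1 := by norm_num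
  rw [this, Real.Gamma_add_one (by norm_num), aux_G52]; ring

lemma aux_G3 : Real.Gamma 3 = 2 := by
  have h := Real.Gamma_nat_eq_factorial 2
  norm_num at h; convert h using 2 <;> norm_num

lemma aux_G114 : Real.Gamma (11/4) = 21/16 * Real.Gamma (3/4) := by
  have h1 : (11/4 : ℝ) = 7/4 + 1 := by norm_num
  have h2 : (7/4 : ℝ) = 3/4 + 1 := by norm_num
  rw [h1, Real.Gamma_add_one (by norm_num), h2, Real.Gamma_add_one (by norm_num)]; ring

lemma sq_rpow_half (a : ℝ) (ha : 0 ≤ a) : (a ^ ((1:ℝ)/2)) ^ 2 = a := by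
  rw [← Real.rpow_natCast (a ^ ((1:ℝ)/2)) 2, ← Real.rpow_mul ha]
  norm_num

lemma aux_G_lt : Real.Gamma (3/4) < 5/4 := by
  have h := Real.Gamma_mul_add_mul_le_rpow_Gamma_mul_rpow_Gamma
    (s := 5/2) (t := 3) (a := 1/2) (b := 1/2) (by norm_num) (by norm_num)
    (by norm_num) (by norm_num) (by norm_num)
  have he : (1/2 : ℝ) * (5/2) + 1/2 * 3 = 11/4 := by norm_num
  rw [he, aux_G114] at h
  have hs : (Real.Gamma (5/2) ^ ((1:ℝ)/2) * Real.Gamma 3 ^ ((1:ℝ)/2)) ^ 2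
      = Real.Gamma (5/2) * Real.Gamma 3 := by
    rw [mul_pow, sq_rpow_half _ (Real.Gamma_nonneg_of_nonneg (by norm_num)),
      sq_rpow_half _ (Real.Gamma_nonneg_of_nonneg (by norm_num))]
  have hG : 0 < Real.Gamma (3/4) := Real.Gamma_pos_of_pos (by norm_num)
  have hsq : (21/16 * Real.Gamma (3/4)) ^ 2 ≤ Real.Gamma (5/2) * Real.Gamma 3 := by
    rw [← hs]
    exact pow_le_pow_left₀ (by positivity) h 2
  rw [aux_G52, aux_G3] at hsq
  nlinarith [aux_sqrt_pi_lt, Real.sqrt_nonneg Real.pi]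

lemma cube_rpow (a : ℝ) (ha : 0 ≤ a) (c : ℝ) : (a ^ c) ^ 3 = a ^ (3 * c) := by
  rw [← Real.rpow_natCast (a ^ c) 3, ← Real.rpow_mul ha]
  ring_nf

lemma aux_G_gt : 59/50 < Real.Gamma (3/4) := by
  have h := Real.Gamma_mul_add_mul_le_rpow_Gamma_mul_rpow_Gamma
    (s := 11/4) (t := 7/2) (a := 2/3) (b := 1/3) (by norm_num) (by norm_num)
    (by norm_num) (by norm_num) (by norm_num)
  have he : (2/3 : ℝ) * (11/4) + 1/3 * (7/2) = 3 := by norm_num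
  rw [he, aux_G3] at h
  have h114 : (0:ℝ) ≤ Real.Gamma (11/4) := Real.Gamma_nonneg_of_nonneg (by norm_num)
  have h72 : (0:ℝ) ≤ Real.Gamma (7/2) := Real.Gamma_nonneg_of_nonneg (by norm_num)
  have hcube : (2:ℝ)^3 ≤ (Real.Gamma (11/4) ^ ((2:ℝ)/3) * Real.Gamma (7/2) ^ ((1:ℝ)/3)) ^ 3 :=
    pow_le_pow_left₀ (by norm_num) h 3
  rw [mul_pow, cube_rpow _ h114, cube_rpow _ h72] at hcube
  have e1 : Real.Gamma (11/4) ^ (3 * ((2:ℝ)/3)) = Real.Gamma (11/4) ^ 2 := by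
    rw [show (3 * ((2:ℝ)/3)) = ((2:ℕ):ℝ) by norm_num, Real.rpow_natCast]
  have e2 : Real.Gamma (7/2) ^ (3 * ((1:ℝ)/3)) = Real.Gamma (7/2) := by
    rw [show (3 * ((1:ℝ)/3)) = (1:ℝ) by norm_num, Real.rpow_one]
  rw [e1, e2, aux_G114, aux_G72] at hcube
  have hG : 0 < Real.Gamma (3/4) := Real.Gamma_pos_of_pos (by norm_num)
  nlinarith [aux_sqrt_pi_lt, Real.sqrt_nonneg Real.pi, Real.sqrt_pos.mpr Real.pi_pos]


lemma gautschi_lower (x : ℝ) (hx : 0 < x) :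
    Real.Gamma (x+1) ≤ Real.Gamma (x+3/4) * (x+3/4) ^ ((1:ℝ)/4) := by
  have h := Real.Gamma_mul_add_mul_le_rpow_Gamma_mul_rpow_Gamma
    (s := x+3/4) (t := x+7/4) (a := 3/4) (b := 1/4) (by linarith) (by linarith)
    (by norm_num) (by norm_num) (by norm_num)
  have he : (3/4:ℝ) * (x+3/4) + 1/4 * (x+7/4) = x+1 := by ring
  have h74 : Real.Gamma (x+7/4) = (x+3/4) * Real.Gamma (x+3/4) := by
    rw [show x+7/4 = (x+3/4)+1 by ring, Real.Gamma_add_one (by linarith)]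
  have hGp : 0 < Real.Gamma (x+3/4) := Real.Gamma_pos_of_pos (by linarith)
  rw [he, h74, Real.mul_rpow (by linarith) hGp.le] at h
  calc Real.Gamma (x+1) ≤ Real.Gamma (x+3/4) ^ ((3:ℝ)/4) *
        ((x+3/4) ^ ((1:ℝ)/4) * Real.Gamma (x+3/4) ^ ((1:ℝ)/4)) := h
    _ = Real.Gamma (x+3/4) ^ ((3:ℝ)/4 + (1:ℝ)/4) * (x+3/4) ^ ((1:ℝ)/4) := by
        rw [Real.rpow_add hGp]; ring
    _ = Real.Gamma (x+3/4) * (x+3/4) ^ ((1:ℝ)/4) := by norm_num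

lemma gautschi_upper (x : ℝ) (hx : 0 < x) :
    Real.Gamma (x+3/4) * x ^ ((1:ℝ)/4) ≤ Real.Gamma (x+1) := by
  have h := Real.Gamma_mul_add_mul_le_rpow_Gamma_mul_rpow_Gamma
    (s := x) (t := x+1) (a := 1/4) (b := 3/4) hx (by linarith)
    (by norm_num) (by norm_num) (by norm_num)
  have he : (1/4:ℝ) * x + 3/4 * (x+1) = x+3/4 := by ring
  rw [he] at h
  have hGp : 0 < Real.Gamma x := Real.Gamma_pos_of_pos hx
  have hG1 : 0 < Real.Gamma (x+1) := Real.Gamma_pos_of_pos (by linarith)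
  have key : Real.Gamma x ^ ((1:ℝ)/4) * Real.Gamma (x+1) ^ ((3:ℝ)/4) * x ^ ((1:ℝ)/4)
      = Real.Gamma (x+1) := by
    have h1 : Real.Gamma x ^ ((1:ℝ)/4) * x ^ ((1:ℝ)/4) = (x * Real.Gamma x) ^ ((1:ℝ)/4) := by
      rw [Real.mul_rpow hx.le hGp.le]; ring
    have h2 : x * Real.Gamma x = Real.Gamma (x+1) := (Real.Gamma_add_one hx.ne').symm
    calc Real.Gamma x ^ ((1:ℝ)/4) * Real.Gamma (x+1) ^ ((3:ℝ)/4) * x ^ ((1:ℝ)/4)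
        = (Real.Gamma x ^ ((1:ℝ)/4) * x ^ ((1:ℝ)/4)) * Real.Gamma (x+1) ^ ((3:ℝ)/4) := by ring
      _ = Real.Gamma (x+1) ^ ((1:ℝ)/4) * Real.Gamma (x+1) ^ ((3:ℝ)/4) := by rw [h1, h2]
      _ = Real.Gamma (x+1) ^ ((1:ℝ)/4 + (3:ℝ)/4) := (Real.rpow_add hG1 _ _).symm
      _ = Real.Gamma (x+1) := by norm_num
  calc Real.Gamma (x+3/4) * x ^ ((1:ℝ)/4)
      ≤ Real.Gamma x ^ ((1:ℝ)/4) * Real.Gamma (x+1) ^ ((3:ℝ)/4) * x ^ ((1:ℝ)/4) :=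
        mul_le_mul_of_nonneg_right h (by positivity)
    _ = Real.Gamma (x+1) := key

set_option maxHeartbeats 1000000 in
theorem stmt_15 (ℓ : ℕ) (hℓ : 0 < ℓ) :
    1 / (5 * ((ℓ : ℝ) + 1) ^ ((5 : ℝ) / 4))
        < Real.Gamma ((ℓ : ℝ) - 1 / 4) / (4 * Real.Gamma (3 / 4) * Nat.factorial ℓ) ∧
    Real.Gamma ((ℓ : ℝ) - 1 / 4) / (4 * Real.Gamma (3 / 4) * Nat.factorial ℓ)
        < 18 / (25 * ((ℓ : ℝ) + 1) ^ ((5 : ℝ) / 4)) := by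
  set x : ℝ := (ℓ : ℝ) with hxdef
  have hx1 : (1:ℝ) ≤ x := by
    rw [hxdef]; exact_mod_cast hℓ
  have hx : (0:ℝ) < x := by linarith
  set A : ℝ := Real.Gamma (x - 1/4) with hAdef
  set G : ℝ := Real.Gamma (3/4) with hGdef
  set F : ℝ := ((Nat.factorial ℓ : ℕ) : ℝ) with hFdef
  have hA : 0 < A := Real.Gamma_pos_of_pos (by linarith)
  have hG : 0 < G := Real.Gamma_pos_of_pos (by norm_num)
  have hGlt : G < 5/4 := aux_G_lt
  have hGgt : 59/50 < G := aux_G_gt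
  have hF : 0 < F := by
    rw [hFdef]; exact_mod_cast Nat.factorial_pos ℓ
  have hrel : Real.Gamma (x + 3/4) = (x - 1/4) * A := by
    rw [hAdef, show x + 3/4 = (x - 1/4) + 1 by ring, Real.Gamma_add_one (by linarith)]
  have hFeq : Real.Gamma (x + 1) = F := Real.Gamma_nat_eq_factorial ℓ
  set t : ℝ := (x+1) ^ ((1:ℝ)/4) with htdef
  set u : ℝ := (x+3/4) ^ ((1:ℝ)/4) with hudef
  set s : ℝ := x ^ ((1:ℝ)/4) with hsdef
  have ht : 0 < t := Real.rpow_pos_of_pos (by linarith) _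
  have hu : 0 < u := Real.rpow_pos_of_pos (by linarith) _
  have hs : 0 < s := Real.rpow_pos_of_pos hx _
  have hp : (x+1) ^ ((5:ℝ)/4) = (x+1) * t := by
    rw [htdef, show (5:ℝ)/4 = 1 + 1/4 by norm_num, Real.rpow_add (by linarith), Real.rpow_one]
  have hut : u ≤ t := Real.rpow_le_rpow (by linarith) (by linarith) (by norm_num)
  have hgl : F ≤ (x - 1/4) * A * u := by
    rw [← hFeq]
    calc Real.Gamma (x+1) ≤ Real.Gamma (x+3/4) * u := gautschi_lower x hx
      _ = (x - 1/4) * A * u := by rw [hrel]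
  have hgu : (x - 1/4) * A * s ≤ F := by
    rw [← hFeq, ← hrel]
    exact gautschi_upper x hx
  constructor
  · rw [div_lt_div_iff₀ (by positivity) (by positivity), hp]
    -- goal: 1 * (4 * G * F) < A * (5 * ((x+1) * t))
    have c1 : 4 * G * F ≤ 4 * G * ((x - 1/4) * A * u) :=
      mul_le_mul_of_nonneg_left hgl (by positivity)
    have d1 : 4 * G * ((x - 1/4) * A) * u ≤ 4 * G * ((x - 1/4) * A) * t :=
      mul_le_mul_of_nonneg_left hut
        (by nlinarith [mul_pos hG (mul_pos (show (0:ℝ) < x - 1/4 by linarith) hA)])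
    have e1 : 4 * G * (x - 1/4) < 5 * (x+1) := by nlinarith
    have d2 : 4 * G * (x - 1/4) * (A * t) < 5 * (x+1) * (A * t) :=
      mul_lt_mul_of_pos_right e1 (mul_pos hA ht)
    linarith [c1, d1, d2]
  · rw [div_lt_div_iff₀ (by positivity) (by positivity), hp]
    -- goal: A * (25 * ((x+1) * t)) < 18 * (4 * G * F)
    have h2x : t ≤ (2*x) ^ ((1:ℝ)/4) :=
      Real.rpow_le_rpow (by linarith) (by linarith) (by norm_num)
    have hmul : (2*x) ^ ((1:ℝ)/4) = (2:ℝ) ^ ((1:ℝ)/4) * s :=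
      Real.mul_rpow (by norm_num) hx.le
    have h24 : (2:ℝ) ^ ((1:ℝ)/4) ≤ 6/5 := by
      have key : ((2:ℝ) ^ ((1:ℝ)/4)) ^ (4:ℕ) = 2 := by
        rw [← Real.rpow_natCast ((2:ℝ) ^ ((1:ℝ)/4)) 4, ← Real.rpow_mul (by norm_num)]
        norm_num
      refine le_of_pow_le_pow_left₀ (n := 4) (by norm_num) (by norm_num) ?_
      rw [key]; norm_num
    have ht65 : t ≤ 6/5 * s := by
      calc t ≤ (2*x) ^ ((1:ℝ)/4) := h2x
        _ = (2:ℝ) ^ ((1:ℝ)/4) * s := hmul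
        _ ≤ 6/5 * s := mul_le_mul_of_nonneg_right h24 hs.le
    have hx8 : x + 1 ≤ 8/3 * (x - 1/4) := by linarith
    have c1 : (x+1) * t ≤ (8/3 * (x - 1/4)) * (6/5 * s) :=
      mul_le_mul hx8 ht65 ht.le (by linarith)
    have c2 : 25 * A * ((x+1) * t) ≤ 25 * A * ((8/3 * (x - 1/4)) * (6/5 * s)) :=
      mul_le_mul_of_nonneg_left c1 (by positivity)
    have c3 : (80:ℝ) * ((x - 1/4) * A * s) ≤ 80 * F :=
      mul_le_mul_of_nonneg_left hgu (by norm_num)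
    have c4 : (80:ℝ) * F < 72 * G * F := by
      nlinarith [mul_lt_mul_of_pos_right hGgt hF]
    linarith [c2, c3, c4]
end
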